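/- arXiv:1701.05182 — 5 statements merged into one kernel-verified Lean document; each statement's English description precedes it below -/
import Mathlib

section
/- Let n, m ≥ 1 and let φ be a map from n×n Hermitian complex matrices to m×m Hermitian complex matrices which is unital (φ(1) = 1), real-linear (φ(xA + yB) = xφ(A) + yφ(B) for all real x, y and Hermitian A, B), and invertibility-preserving (φ(A) is invertible whenever the Hermitian matrix A is invertible). Then φ is a Jordan homomorphism: φ(A²) = φ(A)² for every Hermitian A, and consequently φ(AB + BA) = φ(A)φ(B) + φ(B)φ(A) for all Hermitian A, B. -/
open Matrix Polynomial

section aux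
variable {k : ℕ} {A : Matrix (Fin k) (Fin k) ℂ}

private lemma creal (r : ℝ) (M : Matrix (Fin k) (Fin k) ℂ) : r • M = (r : ℂ) • M := by
  ext i j
  simp [Matrix.smul_apply, Complex.real_smul]

private lemma smul_herm (r : ℝ) (hA : A.IsHermitian) : (r • A).IsHermitian := by
  rw [Matrix.IsHermitian, conjTranspose_smul, star_trivial, hA.eq]

private lemma lin_conj (hA : A.IsHermitian) (c : ℝ) :
    A + c • (1 : Matrix (Fin k) (Fin k) ℂ)
      = (hA.eigenvectorUnitary : Matrix (Fin k) (Fin k) ℂ)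
        * diagonal (fun i => ((hA.eigenvalues i + c : ℝ) : ℂ))
        * star (hA.eigenvectorUnitary : Matrix (Fin k) (Fin k) ℂ) := by
  have hU : (hA.eigenvectorUnitary : Matrix (Fin k) (Fin k) ℂ)
      * star (hA.eigenvectorUnitary : Matrix (Fin k) (Fin k) ℂ) = 1 :=
    (Matrix.mem_unitaryGroup_iff).mp hA.eigenvectorUnitary.2
  set U := (hA.eigenvectorUnitary : Matrix (Fin k) (Fin k) ℂ) with hUdef
  set D : Matrix (Fin k) (Fin k) ℂ := diagonal ((fun r : ℝ => (r:ℂ)) ∘ hA.eigenvalues) with hDdef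
  have hspec : A = U * D * star U := hA.spectral_theorem
  have h3 : c • (1 : Matrix (Fin k) (Fin k) ℂ) = U * (c • 1) * star U := by
    rw [Matrix.mul_smul, Matrix.smul_mul, Matrix.mul_one, hU]
  nth_rewrite 1 [hspec]
  rw [h3, ← Matrix.add_mul, ← Matrix.mul_add]
  congr 2
  ext i j
  by_cases h : i = j
  · subst h
    simp [hDdef, Matrix.diagonal_apply_eq, Matrix.smul_apply, Matrix.one_apply,
      Complex.real_smul]
  · simp [hDdef, Matrix.diagonal_apply_ne _ h, Matrix.smul_apply, Matrix.one_apply, h]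

private lemma lin_det (hA : A.IsHermitian) (c : ℝ) :
    (A + c • (1 : Matrix (Fin k) (Fin k) ℂ)).det
      = ∏ i, ((hA.eigenvalues i + c : ℝ) : ℂ) := by
  have hU : (hA.eigenvectorUnitary : Matrix (Fin k) (Fin k) ℂ)
      * star (hA.eigenvectorUnitary : Matrix (Fin k) (Fin k) ℂ) = 1 :=
    (Matrix.mem_unitaryGroup_iff).mp hA.eigenvectorUnitary.2
  rw [lin_conj hA c]
  set U := (hA.eigenvectorUnitary : Matrix (Fin k) (Fin k) ℂ)
  rw [det_mul, det_mul, mul_comm, ← mul_assoc, mul_comm (det (star U)), ← det_mul, hU, det_one,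
    one_mul, det_diagonal]

private lemma quad_conj (hA : A.IsHermitian) (b c : ℝ) :
    A * A + b • A + c • (1 : Matrix (Fin k) (Fin k) ℂ)
      = (hA.eigenvectorUnitary : Matrix (Fin k) (Fin k) ℂ)
        * diagonal (fun i => ((hA.eigenvalues i ^ 2 + b * hA.eigenvalues i + c : ℝ) : ℂ))
        * star (hA.eigenvectorUnitary : Matrix (Fin k) (Fin k) ℂ) := by
  have hU : (hA.eigenvectorUnitary : Matrix (Fin k) (Fin k) ℂ)
      * star (hA.eigenvectorUnitary : Matrix (Fin k) (Fin k) ℂ) = 1 :=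
    (Matrix.mem_unitaryGroup_iff).mp hA.eigenvectorUnitary.2
  have hU' : star (hA.eigenvectorUnitary : Matrix (Fin k) (Fin k) ℂ)
      * (hA.eigenvectorUnitary : Matrix (Fin k) (Fin k) ℂ) = 1 :=
    (Matrix.mem_unitaryGroup_iff').mp hA.eigenvectorUnitary.2
  set U := (hA.eigenvectorUnitary : Matrix (Fin k) (Fin k) ℂ) with hUdef
  set D : Matrix (Fin k) (Fin k) ℂ := diagonal ((fun r : ℝ => (r:ℂ)) ∘ hA.eigenvalues) with hDdef
  have hspec : A = U * D * star U := hA.spectral_theorem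
  have h1 : A * A = U * (D * D) * star U := by
    rw [hspec]
    calc U * D * star U * (U * D * star U) = U * D * (star U * U) * D * star U := by
          simp only [Matrix.mul_assoc]
      _ = U * (D * D) * star U := by rw [hU']; simp only [Matrix.mul_one, Matrix.mul_assoc]
  have h2 : b • A = U * (b • D) * star U := by
    rw [hspec, Matrix.mul_smul, Matrix.smul_mul]
  have h3 : c • (1 : Matrix (Fin k) (Fin k) ℂ) = U * (c • 1) * star U := by
    rw [Matrix.mul_smul, Matrix.smul_mul, Matrix.mul_one, hU]
  rw [h1, h2, h3, ← Matrix.add_mul, ← Matrix.add_mul, ← Matrix.mul_add, ← Matrix.mul_add]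
  congr 2
  rw [hDdef, diagonal_mul_diagonal]
  ext i j
  by_cases h : i = j
  · subst h
    simp [Matrix.diagonal_apply_eq, Matrix.smul_apply, Matrix.one_apply, Complex.real_smul]
    push_cast
    ring
  · simp [Matrix.diagonal_apply_ne _ h, Matrix.smul_apply, Matrix.one_apply, h]

private lemma quad_det (hA : A.IsHermitian) (b c : ℝ) :
    (A * A + b • A + c • (1 : Matrix (Fin k) (Fin k) ℂ)).det
      = ∏ i, ((hA.eigenvalues i ^ 2 + b * hA.eigenvalues i + c : ℝ) : ℂ) := by
  have hU : (hA.eigenvectorUnitary : Matrix (Fin k) (Fin k) ℂ)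
      * star (hA.eigenvectorUnitary : Matrix (Fin k) (Fin k) ℂ) = 1 :=
    (Matrix.mem_unitaryGroup_iff).mp hA.eigenvectorUnitary.2
  rw [quad_conj hA b c]
  set U := (hA.eigenvectorUnitary : Matrix (Fin k) (Fin k) ℂ)
  rw [det_mul, det_mul, mul_comm, ← mul_assoc, mul_comm (det (star U)), ← det_mul, hU, det_one,
    one_mul, det_diagonal]

private lemma trace_pow_herm (hA : A.IsHermitian) (p : ℕ) :
    (A ^ p).trace = ∑ i, ((hA.eigenvalues i : ℂ)) ^ p := by
  have hU : (hA.eigenvectorUnitary : Matrix (Fin k) (Fin k) ℂ)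
      * star (hA.eigenvectorUnitary : Matrix (Fin k) (Fin k) ℂ) = 1 :=
    (Matrix.mem_unitaryGroup_iff).mp hA.eigenvectorUnitary.2
  have hU' : star (hA.eigenvectorUnitary : Matrix (Fin k) (Fin k) ℂ)
      * (hA.eigenvectorUnitary : Matrix (Fin k) (Fin k) ℂ) = 1 :=
    (Matrix.mem_unitaryGroup_iff').mp hA.eigenvectorUnitary.2
  set U := (hA.eigenvectorUnitary : Matrix (Fin k) (Fin k) ℂ)
  set D : Matrix (Fin k) (Fin k) ℂ := diagonal ((fun r : ℝ => (r:ℂ)) ∘ hA.eigenvalues) with hDdef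
  have hspec : A = U * D * star U := hA.spectral_theorem
  have hpow : A ^ p = U * (D ^ p) * star U := by
    induction p with
    | zero => rw [pow_zero, pow_zero, Matrix.mul_one, hU]
    | succ q ih =>
      rw [pow_succ, ih]
      conv_lhs => rw [hspec]
      calc U * D ^ q * star U * (U * D * star U) = U * D ^ q * (star U * U) * D * star U := by
            simp only [Matrix.mul_assoc]
        _ = U * D ^ (q + 1) * star U := by
            rw [hU']; simp only [Matrix.mul_one, Matrix.mul_assoc, pow_succ]
  rw [hpow, Matrix.trace_mul_cycle, hU', Matrix.one_mul, hDdef, diagonal_pow, trace_diagonal]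
  simp

private lemma frob_zero (Z : Matrix (Fin k) (Fin k) ℂ)
    (h : (Zᴴ * Z).trace = 0) : Z = 0 := by
  have h1 : (Zᴴ * Z).trace = ((∑ i, ∑ j, Complex.normSq (Z j i) : ℝ) : ℂ) := by
    simp only [Matrix.trace, Matrix.diag, Matrix.mul_apply, Matrix.conjTranspose_apply]
    push_cast
    refine Finset.sum_congr rfl fun i _ => Finset.sum_congr rfl fun j _ => ?_
    rw [Complex.star_def, mul_comm, Complex.mul_conj]
  rw [h1] at h
  have h2 : (∑ i, ∑ j, Complex.normSq (Z j i) : ℝ) = 0 := by exact_mod_cast h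
  have h3 : ∀ i ∈ Finset.univ, ∀ j ∈ Finset.univ, Complex.normSq (Z j i) = 0 := by
    have := (Finset.sum_eq_zero_iff_of_nonneg (fun i _ =>
      Finset.sum_nonneg fun j _ => Complex.normSq_nonneg _)).mp h2
    intro i hi j hj
    exact (Finset.sum_eq_zero_iff_of_nonneg (fun j _ => Complex.normSq_nonneg _)).mp
      (this i hi) j hj
  ext i j
  simpa using Complex.normSq_eq_zero.mp (h3 j (Finset.mem_univ _) i (Finset.mem_univ _))

private lemma cyc (X Y Z : Matrix (Fin k) (Fin k) ℂ) :
    (X * (Y * Z)).trace = (Z * (X * Y)).trace := by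
  rw [← Matrix.mul_assoc, Matrix.trace_mul_cycle, Matrix.mul_assoc]

end aux

section trexp
variable {m : ℕ} (P Q : Matrix (Fin m) (Fin m) ℂ) (t : ℂ)

private lemma tr2 : ((t • P + Q) ^ 2).trace
    = t^2 * (P*P).trace + t * ((P*Q).trace + (Q*P).trace) + (Q*Q).trace := by
  simp only [pow_succ, pow_zero, Matrix.one_mul, mul_add, add_mul, Matrix.mul_add,
    Matrix.add_mul, smul_mul_assoc, mul_smul_comm, smul_smul, trace_add, trace_smul,
    smul_eq_mul, Matrix.mul_assoc]
  ring

private lemma tr3 : ((t • P + Q) ^ 3).trace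
    = t^3 * (P*(P*P)).trace
    + t^2 * ((P*(P*Q)).trace + (P*(Q*P)).trace + (Q*(P*P)).trace)
    + t * ((P*(Q*Q)).trace + (Q*(P*Q)).trace + (Q*(Q*P)).trace)
    + (Q*(Q*Q)).trace := by
  simp only [pow_succ, pow_zero, Matrix.one_mul, mul_add, add_mul, Matrix.mul_add,
    Matrix.add_mul, smul_mul_assoc, mul_smul_comm, smul_smul, trace_add, trace_smul,
    smul_eq_mul, Matrix.mul_assoc]
  ring

private lemma tr4 : ((t • P + Q) ^ 4).trace
    = t^4 * (P*(P*(P*P))).trace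
    + t^3 * ((P*(P*(P*Q))).trace + (P*(P*(Q*P))).trace + (P*(Q*(P*P))).trace
        + (Q*(P*(P*P))).trace)
    + t^2 * ((P*(P*(Q*Q))).trace + (P*(Q*(P*Q))).trace + (P*(Q*(Q*P))).trace
        + (Q*(P*(P*Q))).trace + (Q*(P*(Q*P))).trace + (Q*(Q*(P*P))).trace)
    + t * ((P*(Q*(Q*Q))).trace + (Q*(P*(Q*Q))).trace + (Q*(Q*(P*Q))).trace
        + (Q*(Q*(Q*P))).trace)
    + (Q*(Q*(Q*Q))).trace := by
  simp only [pow_succ, pow_zero, Matrix.one_mul, mul_add, add_mul, Matrix.mul_add,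
    Matrix.add_mul, smul_mul_assoc, mul_smul_comm, smul_smul, trace_add, trace_smul,
    smul_eq_mul, Matrix.mul_assoc]
  ring

end trexp

private lemma coeff_eq_of_infinite {S : Set ℝ} (hS : S.Infinite) (a b : Fin 5 → ℂ)
    (h : ∀ s ∈ S, a 0 + a 1 * (s:ℂ) + a 2 * (s:ℂ)^2 + a 3 * (s:ℂ)^3 + a 4 * (s:ℂ)^4
      = b 0 + b 1 * (s:ℂ) + b 2 * (s:ℂ)^2 + b 3 * (s:ℂ)^3 + b 4 * (s:ℂ)^4) :
    a = b := by
  set p : Polynomial ℂ := C (a 0) + C (a 1) * X + C (a 2) * X^2 + C (a 3) * X^3 + C (a 4) * X^4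
    with hp
  set q : Polynomial ℂ := C (b 0) + C (b 1) * X + C (b 2) * X^2 + C (b 3) * X^3 + C (b 4) * X^4
    with hq
  have heval : ∀ s : ℝ, s ∈ S → (p - q).IsRoot (s : ℂ) := by
    intro s hs
    have : p.eval (s:ℂ) = q.eval (s:ℂ) := by
      simp only [hp, hq, eval_add, eval_mul, eval_C, eval_pow, eval_X]
      exact h s hs
    simp [IsRoot, this]
  have hsub : (fun r : ℝ => (r:ℂ)) '' S ⊆ {x | (p - q).IsRoot x} := by
    rintro x ⟨s, hs, rfl⟩; exact heval s hs
  have hpq : p = q := by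
    rw [← sub_eq_zero]
    exact Polynomial.eq_zero_of_infinite_isRoot _
      ((hS.image Complex.ofReal_injective.injOn).mono hsub)
  funext i
  have h0 := congrArg (fun r => Polynomial.coeff r 0) hpq
  have h1 := congrArg (fun r => Polynomial.coeff r 1) hpq
  have h2 := congrArg (fun r => Polynomial.coeff r 2) hpq
  have h3 := congrArg (fun r => Polynomial.coeff r 3) hpq
  have h4 := congrArg (fun r => Polynomial.coeff r 4) hpq
  simp only [hp, hq, coeff_add, coeff_C_mul, coeff_X_pow, coeff_C, coeff_X, mul_ite, mul_one,
    mul_zero] at h0 h1 h2 h3 h4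
  norm_num at h0 h1 h2 h3 h4
  fin_cases i <;> assumption


/-- Any unital, real-linear, invertibility-preserving map from `n×n` Hermitian complex
matrices to `m×m` Hermitian complex matrices is a Jordan homomorphism. -/
theorem unital_invertibilityPreserving_realLinear_isJordanHom
    {n m : ℕ} (hn : 1 ≤ n) (hm : 1 ≤ m)
    (φ : Matrix (Fin n) (Fin n) ℂ → Matrix (Fin m) (Fin m) ℂ)
    (hherm : ∀ A : Matrix (Fin n) (Fin n) ℂ, A.IsHermitian → (φ A).IsHermitian)
    (hunital : φ 1 = 1)
    (hlin : ∀ (x y : ℝ) (A B : Matrix (Fin n) (Fin n) ℂ), A.IsHermitian → B.IsHermitian →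
      φ (x • A + y • B) = x • φ A + y • φ B)
    (hinv : ∀ A : Matrix (Fin n) (Fin n) ℂ, A.IsHermitian → IsUnit A → IsUnit (φ A)) :
    (∀ A : Matrix (Fin n) (Fin n) ℂ, A.IsHermitian → φ (A * A) = φ A * φ A) ∧
    (∀ A B : Matrix (Fin n) (Fin n) ℂ, A.IsHermitian → B.IsHermitian →
      φ (A * B + B * A) = φ A * φ B + φ B * φ A) := by
  have hadd : ∀ A B : Matrix (Fin n) (Fin n) ℂ, A.IsHermitian → B.IsHermitian →
      φ (A + B) = φ A + φ B := by
    intro A B hA hB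
    have := hlin 1 1 A B hA hB
    simpa using this
  have key : ∀ H : Matrix (Fin n) (Fin n) ℂ, H.IsHermitian → φ (H * H) = φ H * φ H := by
    intro H hH
    set P := φ H with hPdef
    set Q := φ (H * H) with hQdef
    have hHH : (H * H).IsHermitian := by
      have := Matrix.isHermitian_mul_conjTranspose_self H
      rwa [hH.eq] at this
    have hP : P.IsHermitian := hherm H hH
    have hQ : Q.IsHermitian := hherm _ hHH
    have hMherm : ∀ s : ℝ, ((s : ℂ) • P + Q).IsHermitian := by
      intro s
      rw [← creal]
      exact (smul_herm s hP).add hQ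
    -- eigenvalue containment
    have contain : ∀ s : ℝ, ∀ j : Fin m, ∃ i : Fin n,
        (hMherm s).eigenvalues j = hH.eigenvalues i ^ 2 + s * hH.eigenvalues i := by
      intro s j
      by_contra hcon
      push_neg at hcon
      set lam := (hMherm s).eigenvalues j with hlam
      have hA'herm : (H * H + s • H + (-lam) • (1 : Matrix (Fin n) (Fin n) ℂ)).IsHermitian :=
        (hHH.add (smul_herm s hH)).add (smul_herm (-lam) Matrix.isHermitian_one)
      have hunitA : IsUnit (H * H + s • H + (-lam) • (1 : Matrix (Fin n) (Fin n) ℂ)) := by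
        rw [Matrix.isUnit_iff_isUnit_det, quad_det hH s (-lam)]
        rw [isUnit_iff_ne_zero]
        apply Finset.prod_ne_zero_iff.mpr
        intro i _
        rw [Complex.ofReal_ne_zero]
        intro h0
        exact hcon i (by linarith [h0])
      have hφunit := hinv _ hA'herm hunitA
      -- compute φ of it
      have hφB : φ (s • H + (-lam) • (1 : Matrix (Fin n) (Fin n) ℂ))
          = s • P + (-lam) • (1 : Matrix (Fin m) (Fin m) ℂ) := by
        rw [hlin s (-lam) H 1 hH Matrix.isHermitian_one, hunital]
      have hφA' : φ (H * H + s • H + (-lam) • (1 : Matrix (Fin n) (Fin n) ℂ))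
          = (s : ℂ) • P + Q + (-lam) • (1 : Matrix (Fin m) (Fin m) ℂ) := by
        rw [add_assoc, hadd (H * H) _ hHH ((smul_herm s hH).add (smul_herm (-lam)
          Matrix.isHermitian_one)), hφB, creal s P]
        abel
      rw [hφA'] at hφunit
      -- but that matrix has determinant zero
      have hdet0 : ((s : ℂ) • P + Q + (-lam) • (1 : Matrix (Fin m) (Fin m) ℂ)).det = 0 := by
        rw [lin_det (hMherm s) (-lam)]
        apply Finset.prod_eq_zero (Finset.mem_univ j)
        rw [← hlam]
        simp
      rw [Matrix.isUnit_iff_isUnit_det, hdet0, isUnit_zero_iff] at hφunit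
      exact one_ne_zero hφunit.symm
    -- choice of line assignment
    have choice : ∀ s : ℝ, ∃ c : Fin m → Fin n, ∀ j : Fin m,
        (hMherm s).eigenvalues j = hH.eigenvalues (c j) ^ 2 + s * hH.eigenvalues (c j) :=
      fun s => ⟨fun j => Classical.choose (contain s j),
        fun j => Classical.choose_spec (contain s j)⟩
    obtain ⟨c, hcfib⟩ := Finite.exists_infinite_fiber (fun s => Classical.choose (choice s))
    have hS : ((fun s => Classical.choose (choice s)) ⁻¹' {c}).Infinite :=
      Set.infinite_coe_iff.mp hcfib
    set S := ((fun s => Classical.choose (choice s)) ⁻¹' {c}) with hSdef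
    set ν : Fin m → ℂ := fun j => (hH.eigenvalues (c j) : ℂ) with hνdef
    have hSprop : ∀ s ∈ S, ∀ j : Fin m,
        ((hMherm s).eigenvalues j : ℂ) = (s : ℂ) * ν j + ν j ^ 2 := by
      intro s hs j
      have hgs : Classical.choose (choice s) = c := hs
      have hsp := Classical.choose_spec (choice s) j
      rw [hgs] at hsp
      rw [hsp, hνdef]
      push_cast
      ring
    -- trace identities via polynomial coefficients
    have etrace : ∀ s ∈ S, ∀ p : ℕ,
        (((s:ℂ) • P + Q) ^ p).trace = ∑ j, ((s : ℂ) * ν j + ν j ^ 2) ^ p := by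
      intro s hs p
      rw [trace_pow_herm (hMherm s) p]
      exact Finset.sum_congr rfl fun j _ => by rw [hSprop s hs j]
    -- k = 2
    have hk2 := coeff_eq_of_infinite hS
      ![(Q*Q).trace, (P*Q).trace + (Q*P).trace, (P*P).trace, 0, 0]
      ![∑ j, ν j^4, ∑ j, 2 * ν j^3, ∑ j, ν j^2, 0, 0]
      (by
        intro s hs
        have e1 := etrace s hs 2
        have e2 := tr2 P Q (s:ℂ)
        have e3 : ∑ j, ((s:ℂ) * ν j + ν j ^ 2) ^ 2
            = (∑ j, ν j^4) + (∑ j, 2 * ν j^3) * (s:ℂ) + (∑ j, ν j^2) * (s:ℂ)^2 := by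
          simp only [Finset.sum_mul]
          rw [← Finset.sum_add_distrib, ← Finset.sum_add_distrib]
          exact Finset.sum_congr rfl fun j _ => by ring
        simp only [Matrix.cons_val_zero, Matrix.cons_val_one, Matrix.head_cons,
          Matrix.cons_val_two, Matrix.tail_cons, Matrix.cons_val_three,
          Matrix.cons_val_four, Matrix.head_fin_const]
        linear_combination e1 - e2 + e3)
    have t1 : (Q*Q).trace = ∑ j, ν j^4 := by
      have h0 := congrFun hk2 0
      simpa only [Matrix.cons_val_zero] using h0
    -- k = 3
    have hk3 := coeff_eq_of_infinite hS
      ![(Q*(Q*Q)).trace, (P*(Q*Q)).trace + (Q*(P*Q)).trace + (Q*(Q*P)).trace,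
        (P*(P*Q)).trace + (P*(Q*P)).trace + (Q*(P*P)).trace, (P*(P*P)).trace, 0]
      ![∑ j, ν j^6, ∑ j, 3 * ν j^5, ∑ j, 3 * ν j^4, ∑ j, ν j^3, 0]
      (by
        intro s hs
        have e1 := etrace s hs 3
        have e2 := tr3 P Q (s:ℂ)
        have e3 : ∑ j, ((s:ℂ) * ν j + ν j ^ 2) ^ 3
            = (∑ j, ν j^6) + (∑ j, 3 * ν j^5) * (s:ℂ) + (∑ j, 3 * ν j^4) * (s:ℂ)^2
              + (∑ j, ν j^3) * (s:ℂ)^3 := by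
          simp only [Finset.sum_mul]
          rw [← Finset.sum_add_distrib, ← Finset.sum_add_distrib, ← Finset.sum_add_distrib]
          exact Finset.sum_congr rfl fun j _ => by ring
        simp only [Matrix.cons_val_zero, Matrix.cons_val_one, Matrix.head_cons,
          Matrix.cons_val_two, Matrix.tail_cons, Matrix.cons_val_three,
          Matrix.cons_val_four, Matrix.head_fin_const]
        linear_combination e1 - e2 + e3)
    have t2 : (P*(P*Q)).trace + (P*(Q*P)).trace + (Q*(P*P)).trace = ∑ j, 3 * ν j^4 := by
      have h0 := congrFun hk3 2
      simpa only [Matrix.cons_val_two, Matrix.tail_cons, Matrix.head_cons] using h0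
    -- k = 4
    have hk4 := coeff_eq_of_infinite hS
      ![(Q*(Q*(Q*Q))).trace,
        (P*(Q*(Q*Q))).trace + (Q*(P*(Q*Q))).trace + (Q*(Q*(P*Q))).trace + (Q*(Q*(Q*P))).trace,
        (P*(P*(Q*Q))).trace + (P*(Q*(P*Q))).trace + (P*(Q*(Q*P))).trace
          + (Q*(P*(P*Q))).trace + (Q*(P*(Q*P))).trace + (Q*(Q*(P*P))).trace,
        (P*(P*(P*Q))).trace + (P*(P*(Q*P))).trace + (P*(Q*(P*P))).trace + (Q*(P*(P*P))).trace,
        (P*(P*(P*P))).trace]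
      ![∑ j, ν j^8, ∑ j, 4 * ν j^7, ∑ j, 6 * ν j^6, ∑ j, 4 * ν j^5, ∑ j, ν j^4]
      (by
        intro s hs
        have e1 := etrace s hs 4
        have e2 := tr4 P Q (s:ℂ)
        have e3 : ∑ j, ((s:ℂ) * ν j + ν j ^ 2) ^ 4
            = (∑ j, ν j^8) + (∑ j, 4 * ν j^7) * (s:ℂ) + (∑ j, 6 * ν j^6) * (s:ℂ)^2
              + (∑ j, 4 * ν j^5) * (s:ℂ)^3 + (∑ j, ν j^4) * (s:ℂ)^4 := by
          simp only [Finset.sum_mul]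
          rw [← Finset.sum_add_distrib, ← Finset.sum_add_distrib, ← Finset.sum_add_distrib,
            ← Finset.sum_add_distrib]
          exact Finset.sum_congr rfl fun j _ => by ring
        simp only [Matrix.cons_val_zero, Matrix.cons_val_one, Matrix.head_cons,
          Matrix.cons_val_two, Matrix.tail_cons, Matrix.cons_val_three,
          Matrix.cons_val_four, Matrix.head_fin_const]
        linear_combination e1 - e2 + e3)
    have t3 : (P*(P*(P*P))).trace = ∑ j, ν j^4 := by
      have h0 := congrFun hk4 4
      simpa only [Matrix.cons_val_four, Matrix.tail_cons, Matrix.head_cons,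
        Matrix.head_fin_const] using h0
    -- cyclic rewrites
    have c1 : (P*(Q*P)).trace = (P*(P*Q)).trace := cyc P Q P
    have c2 : (Q*(P*P)).trace = (P*(P*Q)).trace := (cyc Q P P).trans c1
    have tPPQ : (P*(P*Q)).trace = ∑ j, ν j^4 := by
      have h3 : (3:ℂ) * (P*(P*Q)).trace = (3:ℂ) * ∑ j, ν j^4 := by
        rw [c1, c2] at t2
        rw [Finset.mul_sum]
        calc (3:ℂ) * (P*(P*Q)).trace = (P*(P*Q)).trace + (P*(P*Q)).trace
              + (P*(P*Q)).trace := by ring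
          _ = ∑ j, 3 * ν j^4 := t2
      exact (mul_right_inj' (by norm_num : (3:ℂ) ≠ 0)).mp h3
    -- conclude
    have hZ : (Q - P * P).IsHermitian := by
      apply Matrix.IsHermitian.sub hQ
      have := Matrix.isHermitian_mul_conjTranspose_self P
      rwa [hP.eq] at this
    have htr0 : ((Q - P * P)ᴴ * (Q - P * P)).trace = 0 := by
      rw [hZ.eq]
      have hexp : ((Q - P * P) * (Q - P * P)).trace
          = (Q*Q).trace - (Q*(P*P)).trace - (P*(P*Q)).trace + (P*(P*(P*P))).trace := by
        simp only [Matrix.sub_mul, Matrix.mul_sub, trace_sub, Matrix.mul_assoc]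
        ring
      rw [hexp, t1, t3, c2, tPPQ]
      ring
    have := frob_zero _ htr0
    have hQP : Q = P * P := by
      rwa [sub_eq_zero] at this
    exact hQP
  refine ⟨key, ?_⟩
  intro A B hA hB
  have hA2 : (A * A).IsHermitian := by
    have := Matrix.isHermitian_mul_conjTranspose_self A
    rwa [hA.eq] at this
  have hB2 : (B * B).IsHermitian := by
    have := Matrix.isHermitian_mul_conjTranspose_self B
    rwa [hB.eq] at this
  have hAB : (A * B + B * A).IsHermitian := by
    rw [Matrix.IsHermitian, conjTranspose_add, conjTranspose_mul, conjTranspose_mul,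
      hA.eq, hB.eq, add_comm]
  have hSq := key (A + B) (hA.add hB)
  have hexp : (A + B) * (A + B) = A * A + (A * B + B * A) + B * B := by noncomm_ring
  rw [hexp, hadd _ _ (hA2.add hAB) hB2, hadd _ _ hA2 hAB, key A hA, key B hB,
    hadd A B hA hB] at hSq
  have hexp2 : (φ A + φ B) * (φ A + φ B)
      = φ A * φ A + (φ A * φ B + φ B * φ A) + φ B * φ B := by noncomm_ring
  rw [hexp2] at hSq
  have h1 := add_right_cancel hSq
  exact add_left_cancel h1
end

section
/- Let U be a unitary on ℂⁿ ⊗ ℂᵉ, and let P, Q be orthogonal projectors on ℂᵉ with PQ = 0 and P + Q = 1 and P ≠ 0. Define the encoding ℰ(M) = U(M ⊗ P + M̄ ⊗ Q)U† for n×n matrices M. Let σ be a density matrix on ℂᵉ with Pσ = σ, and define ℰ_state(ρ) = U(ρ ⊗ σ)U†. Then for every Hermitian n×n matrix A and every density matrix ρ on ℂⁿ: tr(ℰ(A)·ℰ_state(ρ)) = tr(A·ρ). -/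
open scoped Matrix Kronecker ComplexOrder

/-- For an encoding `ℰ(M) = U(M ⊗ P + M̄ ⊗ Q)U†` and the corresponding state encoding
`ℰ_state(ρ) = U(ρ ⊗ σ)U†` with `Pσ = σ`, encoded measurements have the correct
expectation values: `tr(ℰ(A)·ℰ_state(ρ)) = tr(A·ρ)`. -/
theorem encoding_preserves_expectation_values
    {n e : ℕ}
    (U : Matrix (Fin n × Fin e) (Fin n × Fin e) ℂ)
    (hU : U ∈ Matrix.unitaryGroup (Fin n × Fin e) ℂ)
    (P Q : Matrix (Fin e) (Fin e) ℂ)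
    (hPherm : P.IsHermitian) (hPproj : P * P = P)
    (hQherm : Q.IsHermitian) (hQproj : Q * Q = Q)
    (hPQ : P * Q = 0) (hPQ1 : P + Q = 1) (hPne : P ≠ 0)
    (σ : Matrix (Fin e) (Fin e) ℂ) (hσ : σ.PosSemidef) (hσtr : σ.trace = 1)
    (hPσ : P * σ = σ)
    (A : Matrix (Fin n) (Fin n) ℂ) (hA : A.IsHermitian)
    (ρ : Matrix (Fin n) (Fin n) ℂ) (hρ : ρ.PosSemidef) (hρtr : ρ.trace = 1) :
    ((U * (A ⊗ₖ P + (A.map (starRingEnd ℂ)) ⊗ₖ Q) * Uᴴ) * (U * (ρ ⊗ₖ σ) * Uᴴ)).trace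
      = (A * ρ).trace := by
  have hUU : Uᴴ * U = 1 := hU.1
  have hQσ : Q * σ = 0 := by
    have hQP : Q * P = 0 := by
      have := congrArg Matrix.conjTranspose hPQ
      simpa [Matrix.conjTranspose_mul, hPherm.eq, hQherm.eq] using this
    calc Q * σ = Q * (P * σ) := by rw [hPσ]
    _ = Q * P * σ := by rw [Matrix.mul_assoc]
    _ = 0 := by rw [hQP, Matrix.zero_mul]
  have hPσtr : (P * σ).trace = 1 := by rw [hPσ, hσtr]
  calc ((U * (A ⊗ₖ P + (A.map (starRingEnd ℂ)) ⊗ₖ Q) * Uᴴ) * (U * (ρ ⊗ₖ σ) * Uᴴ)).trace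
      = (U * ((A ⊗ₖ P + (A.map (starRingEnd ℂ)) ⊗ₖ Q) * (ρ ⊗ₖ σ)) * Uᴴ).trace := by
        rw [show (U * (A ⊗ₖ P + (A.map (starRingEnd ℂ)) ⊗ₖ Q) * Uᴴ) * (U * (ρ ⊗ₖ σ) * Uᴴ)
          = U * ((A ⊗ₖ P + (A.map (starRingEnd ℂ)) ⊗ₖ Q) * ((Uᴴ * U) * (ρ ⊗ₖ σ))) * Uᴴ by
          noncomm_ring, hUU, Matrix.one_mul]
    _ = ((A ⊗ₖ P + (A.map (starRingEnd ℂ)) ⊗ₖ Q) * (ρ ⊗ₖ σ)).trace := by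
        rw [Matrix.trace_mul_cycle, ← Matrix.mul_assoc, hUU, Matrix.one_mul]
    _ = ((A * ρ) ⊗ₖ (P * σ)).trace + ((A.map (starRingEnd ℂ) * ρ) ⊗ₖ (Q * σ)).trace := by
        rw [Matrix.add_mul, Matrix.trace_add, Matrix.mul_kronecker_mul,
          Matrix.mul_kronecker_mul]
    _ = (A * ρ).trace := by
        rw [hQσ, Matrix.trace_kronecker, Matrix.trace_kronecker, hPσtr]
        simp
end

section
/- Let U be a unitary on ℂⁿ ⊗ ℂᵉ, and let P, Q be orthogonal projectors on ℂᵉ with PQ = 0 and P + Q = 1 and P ≠ 0. Define the encoding ℰ(M) = U(M ⊗ P + M̄ ⊗ Q)U† for n×n matrices M. Let σ be a density matrix on ℂᵉ with Pσ = σ, and define ℰ_state(ρ) = U(ρ ⊗ σ)U†. Then for every Hermitian n×n matrix H, every density matrix ρ on ℂⁿ, and every t ∈ ℝ: exp(−i·ℰ(H)·t) · ℰ_state(ρ) · exp(i·ℰ(H)·t) = ℰ_state( exp(−iHt) · ρ · exp(iHt) ), where exp denotes the matrix exponential. -/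
open scoped Matrix Kronecker ComplexOrder

/-!
Write `K = H ⊗ P + H̄ ⊗ Q`. Since `Pσ = σ = σP` and `Q = 1 - P`, the matrix `1 ⊗ σ`
semiconjugates `H ⊗ 1` to `K` and `K` to `H ⊗ 1`. Semiconjugacy passes to exponentials, and
`exp (H ⊗ 1) = exp H ⊗ 1`, so `exp (aK) (ρ ⊗ σ) exp (bK) = (exp (aH) ρ exp (bH)) ⊗ σ`;
the unitary `U` only conjugates both sides.
-/

open NormedSpace

namespace Matrix

variable {m n : Type*} [Fintype m] [DecidableEq m] [Fintype n] [DecidableEq n]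

section Exp

variable {𝕜 : Type*} [RCLike 𝕜]

theorem exp_kronecker_one (A : Matrix m m 𝕜) :
    exp (A ⊗ₖ (1 : Matrix n n 𝕜)) = exp A ⊗ₖ (1 : Matrix n n 𝕜) := by
  let f : Matrix m m 𝕜 →ₐ[𝕜] Matrix (m × n) (m × n) 𝕜 :=
    (kroneckerAlgEquiv m n 𝕜).toAlgHom.comp Algebra.TensorProduct.includeLeft
  have hf (X : Matrix m m 𝕜) : f X = X ⊗ₖ 1 := by simp [f]
  rw [← hf, ← hf]
  exact (open scoped Norms.Operator in
    map_exp f f.toLinearMap.continuous_of_finiteDimensional A).symm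

theorem _root_.SemiconjBy.matrix_exp_right {S A B : Matrix m m 𝕜} (h : SemiconjBy S A B) :
    SemiconjBy S (exp A) (exp B) :=
  open scoped Norms.Operator in h.exp_right

theorem exp_unitary_conj {U : Matrix m m 𝕜} (hU : U ∈ unitaryGroup m 𝕜) (A : Matrix m m 𝕜) :
    exp (U * A * Uᴴ) = U * exp A * Uᴴ := by
  have hUU : Uᴴ * U = 1 := mem_unitaryGroup_iff'.mp hU
  have hUU' : U * Uᴴ = 1 := mem_unitaryGroup_iff.mp hU
  have hconj : SemiconjBy U A (U * A * Uᴴ) := by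
    rw [SemiconjBy, Matrix.mul_assoc _ Uᴴ, hUU, Matrix.mul_one]
  calc exp (U * A * Uᴴ) = exp (U * A * Uᴴ) * U * Uᴴ := by
        rw [Matrix.mul_assoc (exp _), hUU', Matrix.mul_one]
    _ = U * exp A * Uᴴ := by rw [← hconj.matrix_exp_right.eq]

theorem exp_mul_kronecker_of_semiconjBy {A : Matrix m m 𝕜} {K : Matrix (m × n) (m × n) 𝕜}
    {σ : Matrix n n 𝕜} (h : SemiconjBy (1 ⊗ₖ σ) (A ⊗ₖ 1) K) (X : Matrix m m 𝕜) :
    exp K * (X ⊗ₖ σ) = (exp A * X) ⊗ₖ σ := by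
  have hexp := h.matrix_exp_right
  rw [exp_kronecker_one] at hexp
  calc exp K * (X ⊗ₖ σ) = exp K * (1 ⊗ₖ σ) * (X ⊗ₖ 1) := by
        rw [Matrix.mul_assoc, ← mul_kronecker_mul, Matrix.one_mul, Matrix.mul_one]
    _ = (exp A * X) ⊗ₖ σ := by
        rw [← hexp.eq, Matrix.mul_assoc, ← mul_kronecker_mul, ← mul_kronecker_mul]
        simp only [Matrix.one_mul, Matrix.mul_one]

theorem kronecker_mul_exp_of_semiconjBy {A : Matrix m m 𝕜} {K : Matrix (m × n) (m × n) 𝕜}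
    {σ : Matrix n n 𝕜} (h : SemiconjBy (1 ⊗ₖ σ) K (A ⊗ₖ 1)) (X : Matrix m m 𝕜) :
    (X ⊗ₖ σ) * exp K = (X * exp A) ⊗ₖ σ := by
  have hexp := h.matrix_exp_right
  rw [exp_kronecker_one] at hexp
  calc (X ⊗ₖ σ) * exp K = (X ⊗ₖ 1) * ((1 ⊗ₖ σ) * exp K) := by
        rw [← Matrix.mul_assoc, ← mul_kronecker_mul, Matrix.one_mul, Matrix.mul_one]
    _ = (X * exp A) ⊗ₖ σ := by
        rw [hexp.eq, ← Matrix.mul_assoc, ← mul_kronecker_mul, ← mul_kronecker_mul]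
        simp only [Matrix.one_mul, Matrix.mul_one]

end Exp

section Encoding

variable {R : Type*} [CommRing R] {P Q σ : Matrix n n R}

theorem semiconjBy_kronecker_one_encoding (hPQ : P + Q = 1) (hPσ : P * σ = σ)
    (A B : Matrix m m R) :
    SemiconjBy (1 ⊗ₖ σ) (A ⊗ₖ 1) (A ⊗ₖ P + B ⊗ₖ Q) := by
  have hQσ : Q * σ = 0 := by
    rw [eq_sub_of_add_eq' hPQ, Matrix.sub_mul, hPσ, Matrix.one_mul, sub_self]
  simp only [SemiconjBy, Matrix.add_mul, ← mul_kronecker_mul, hPσ, hQσ, Matrix.mul_one,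
    Matrix.one_mul, kronecker_zero, add_zero]

theorem semiconjBy_encoding_kronecker_one (hPQ : P + Q = 1) (hσP : σ * P = σ)
    (A B : Matrix m m R) :
    SemiconjBy (1 ⊗ₖ σ) (A ⊗ₖ P + B ⊗ₖ Q) (A ⊗ₖ 1) := by
  have hσQ : σ * Q = 0 := by
    rw [eq_sub_of_add_eq' hPQ, Matrix.mul_sub, hσP, Matrix.mul_one, sub_self]
  simp only [SemiconjBy, Matrix.mul_add, ← mul_kronecker_mul, hσP, hσQ, Matrix.mul_one,
    Matrix.one_mul, kronecker_zero, add_zero]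

end Encoding

theorem exp_smul_encoding_mul_kronecker_mul_exp_smul {𝕜 : Type*} [RCLike 𝕜]
    {P Q σ : Matrix n n 𝕜} (hPQ : P + Q = 1) (hPσ : P * σ = σ) (hσP : σ * P = σ)
    (A B X : Matrix m m 𝕜) (a b : 𝕜) :
    exp (a • (A ⊗ₖ P + B ⊗ₖ Q)) * (X ⊗ₖ σ) * exp (b • (A ⊗ₖ P + B ⊗ₖ Q))
      = (exp (a • A) * X * exp (b • A)) ⊗ₖ σ := by
  have hleft := (semiconjBy_kronecker_one_encoding hPQ hPσ A B).smul_right a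
  have hright := (semiconjBy_encoding_kronecker_one hPQ hσP A B).smul_right b
  rw [← smul_kronecker] at hleft hright
  rw [exp_mul_kronecker_of_semiconjBy hleft, kronecker_mul_exp_of_semiconjBy hright]

end Matrix

theorem encoding_simulates_time_evolution_general
    {n e : ℕ}
    (U : Matrix (Fin n × Fin e) (Fin n × Fin e) ℂ)
    (hU : U ∈ Matrix.unitaryGroup (Fin n × Fin e) ℂ)
    (P Q : Matrix (Fin e) (Fin e) ℂ)
    (hPherm : P.IsHermitian)
    (hPQ1 : P + Q = 1)
    (σ : Matrix (Fin e) (Fin e) ℂ) (hσ : σ.PosSemidef)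
    (hPσ : P * σ = σ)
    (H : Matrix (Fin n) (Fin n) ℂ)
    (ρ : Matrix (Fin n) (Fin n) ℂ)
    (t : ℝ) :
    NormedSpace.exp ((-(Complex.I * (t : ℂ))) •
        (U * (H ⊗ₖ P + (H.map (starRingEnd ℂ)) ⊗ₖ Q) * Uᴴ)) *
      (U * (ρ ⊗ₖ σ) * Uᴴ) *
      NormedSpace.exp ((Complex.I * (t : ℂ)) •
        (U * (H ⊗ₖ P + (H.map (starRingEnd ℂ)) ⊗ₖ Q) * Uᴴ))
    = U * ((NormedSpace.exp ((-(Complex.I * (t : ℂ))) • H) * ρ *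
        NormedSpace.exp ((Complex.I * (t : ℂ)) • H)) ⊗ₖ σ) * Uᴴ := by
  have hσP : σ * P = σ := by
    simpa only [Matrix.conjTranspose_mul, hσ.isHermitian.eq, hPherm.eq] using
      congrArg Matrix.conjTranspose hPσ
  have hsmul (c : ℂ) (K : Matrix (Fin n × Fin e) (Fin n × Fin e) ℂ) :
      c • (U * K * Uᴴ) = U * (c • K) * Uᴴ := by
    rw [← smul_mul_assoc, ← mul_smul_comm]
  have hUU : Uᴴ * U = 1 := Matrix.mem_unitaryGroup_iff'.mp hU
  have hcancel (Y : Matrix (Fin n × Fin e) (Fin n × Fin e) ℂ) : Uᴴ * (U * Y) = Y := by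
    rw [← Matrix.mul_assoc, hUU, Matrix.one_mul]
  rw [hsmul, hsmul, Matrix.exp_unitary_conj hU, Matrix.exp_unitary_conj hU,
    ← Matrix.exp_smul_encoding_mul_kronecker_mul_exp_smul hPQ1 hPσ hσP H (H.map (starRingEnd ℂ))]
  simp only [Matrix.mul_assoc, hcancel]

/-- For an encoding `ℰ(M) = U(M ⊗ P + M̄ ⊗ Q)U†` (with `P ≠ 0`, a "standard" encoding)
and state encoding `ℰ_state(ρ) = U(ρ ⊗ σ)U†` with `Pσ = σ`, time evolution under `ℰ(H)`
simulates time evolution under `H`: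
`exp(−iℰ(H)t) ℰ_state(ρ) exp(iℰ(H)t) = ℰ_state(exp(−iHt) ρ exp(iHt))`. -/
theorem encoding_simulates_time_evolution
    {n e : ℕ}
    (U : Matrix (Fin n × Fin e) (Fin n × Fin e) ℂ)
    (hU : U ∈ Matrix.unitaryGroup (Fin n × Fin e) ℂ)
    (P Q : Matrix (Fin e) (Fin e) ℂ)
    (hPherm : P.IsHermitian) (hPproj : P * P = P)
    (hQherm : Q.IsHermitian) (hQproj : Q * Q = Q)
    (hPQ : P * Q = 0) (hPQ1 : P + Q = 1) (hPne : P ≠ 0)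
    (σ : Matrix (Fin e) (Fin e) ℂ) (hσ : σ.PosSemidef) (hσtr : σ.trace = 1)
    (hPσ : P * σ = σ)
    (H : Matrix (Fin n) (Fin n) ℂ) (hH : H.IsHermitian)
    (ρ : Matrix (Fin n) (Fin n) ℂ) (hρ : ρ.PosSemidef) (hρtr : ρ.trace = 1)
    (t : ℝ) :
    NormedSpace.exp ((-(Complex.I * (t : ℂ))) •
        (U * (H ⊗ₖ P + (H.map (starRingEnd ℂ)) ⊗ₖ Q) * Uᴴ)) *
      (U * (ρ ⊗ₖ σ) * Uᴴ) *
      NormedSpace.exp ((Complex.I * (t : ℂ)) •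
        (U * (H ⊗ₖ P + (H.map (starRingEnd ℂ)) ⊗ₖ Q) * Uᴴ))
    = U * ((NormedSpace.exp ((-(Complex.I * (t : ℂ))) • H) * ρ *
        NormedSpace.exp ((Complex.I * (t : ℂ)) • H)) ⊗ₖ σ) * Uᴴ :=
  encoding_simulates_time_evolution_general U hU P Q hPherm hPQ1 σ hσ hPσ H ρ t
end

section
/- Let ℰ₂(M) = W(M ⊗ P⁽²⁾ + M̄ ⊗ Q⁽²⁾)W† be a map from n×n matrices to m×m matrices, and ℰ₁(M) = V(M ⊗ P⁽¹⁾ + M̄ ⊗ Q⁽¹⁾)V† a map from m×m matrices to m'×m' matrices, where V, W are isometries and each pair P⁽ⁱ⁾, Q⁽ⁱ⁾ consists of orthogonal projectors on the respective ancilla space with P⁽ⁱ⁾Q⁽ⁱ⁾ = 0. Then the composition ℰ₁ ∘ ℰ₂ is again of this form: there exist an isometry U' and orthogonal projectors P, Q with PQ = 0 on an ancilla space such that (ℰ₁ ∘ ℰ₂)(M) = U'(M ⊗ P + M̄ ⊗ Q)U'† for all n×n matrices M; explicitly one may take P = P⁽²⁾ ⊗ P⁽¹⁾ + Q̄⁽²⁾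 ⊗ Q⁽¹⁾ and Q = Q⁽²⁾ ⊗ P⁽¹⁾ + P̄⁽²⁾ ⊗ Q⁽¹⁾. -/
open scoped Matrix Kronecker

/-- Entrywise complex conjugate of a matrix. -/
def mconj {m n : Type*} (A : Matrix m n ℂ) : Matrix m n ℂ := A.map (starRingEnd ℂ)

lemma mconj_mul {k l p : Type*} [Fintype l] (A : Matrix k l ℂ) (B : Matrix l p ℂ) :
    mconj (A * B) = mconj A * mconj B := Matrix.map_mul

lemma mconj_zero {k l : Type*} : mconj (0 : Matrix k l ℂ) = 0 := by
  ext i j; simp [mconj]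

lemma mconj_one {k : Type*} [DecidableEq k] : mconj (1 : Matrix k k ℂ) = 1 :=
  Matrix.map_one _ (map_zero _) (map_one _)

lemma conjTranspose_mconj {k l : Type*} (A : Matrix k l ℂ) :
    (mconj A)ᴴ = mconj (Aᴴ) := by
  ext i j; simp [mconj]

lemma kronecker_conjTranspose {k l p q : Type*} (A : Matrix k l ℂ) (B : Matrix p q ℂ) :
    (A ⊗ₖ B)ᴴ = Aᴴ ⊗ₖ Bᴴ := by
  ext ⟨i, j⟩ ⟨a, b⟩
  simp [Matrix.conjTranspose_apply, Matrix.kroneckerMap_apply, star_mul', mul_comm]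

/-- The key computation: `B := W ⊗ (1-Q₁) + W̄ ⊗ Q₁` is an isometry which implements the
outer encoding. -/
lemma encode_aux {a b c : Type*} [Fintype a] [Fintype b] [Fintype c] [DecidableEq b] [DecidableEq c]
    (W : Matrix a b ℂ) (hW : Wᴴ * W = 1)
    (P₁ Q₁ : Matrix c c ℂ)
    (hP₁herm : P₁.IsHermitian) (hQ₁herm : Q₁.IsHermitian)
    (hQ₁proj : Q₁ * Q₁ = Q₁) (hPQ₁ : P₁ * Q₁ = 0) (hQP₁ : Q₁ * P₁ = 0) :
    (W ⊗ₖ (1 - Q₁) + mconj W ⊗ₖ Q₁)ᴴ * (W ⊗ₖ (1 - Q₁) + mconj W ⊗ₖ Q₁) = 1 ∧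
    ∀ X : Matrix b b ℂ,
      (W ⊗ₖ (1 - Q₁) + mconj W ⊗ₖ Q₁) * (X ⊗ₖ P₁ + mconj X ⊗ₖ Q₁) *
          (W ⊗ₖ (1 - Q₁) + mconj W ⊗ₖ Q₁)ᴴ
        = (W * X * Wᴴ) ⊗ₖ P₁ + mconj (W * X * Wᴴ) ⊗ₖ Q₁ := by
  have hRQ : ((1 : Matrix c c ℂ) - Q₁) * Q₁ = 0 := by
    rw [sub_mul, one_mul, hQ₁proj, sub_self]
  have hQR : Q₁ * ((1 : Matrix c c ℂ) - Q₁) = 0 := by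
    rw [mul_sub, mul_one, hQ₁proj, sub_self]
  have hRR : ((1 : Matrix c c ℂ) - Q₁) * ((1 : Matrix c c ℂ) - Q₁) = 1 - Q₁ := by
    rw [mul_sub, mul_one, sub_mul, one_mul, hQ₁proj, sub_self, sub_zero]
  have hRP : ((1 : Matrix c c ℂ) - Q₁) * P₁ = P₁ := by
    rw [sub_mul, one_mul, hQP₁, sub_zero]
  have hPR : P₁ * ((1 : Matrix c c ℂ) - Q₁) = P₁ := by
    rw [mul_sub, mul_one, hPQ₁, sub_zero]
  have hWc : mconj (Wᴴ) * mconj W = 1 := by rw [← mconj_mul, hW, mconj_one]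
  have hBH : (W ⊗ₖ ((1 : Matrix c c ℂ) - Q₁) + mconj W ⊗ₖ Q₁)ᴴ
      = Wᴴ ⊗ₖ ((1 : Matrix c c ℂ) - Q₁) + mconj (Wᴴ) ⊗ₖ Q₁ := by
    rw [Matrix.conjTranspose_add, kronecker_conjTranspose, kronecker_conjTranspose,
      conjTranspose_mconj, Matrix.conjTranspose_sub, Matrix.conjTranspose_one, hQ₁herm.eq]
  constructor
  · rw [hBH]
    simp only [Matrix.add_mul, Matrix.mul_add, ← Matrix.mul_kronecker_mul, hW, hWc, hRR, hRQ, hQR, hQ₁proj,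
      Matrix.kronecker_zero, add_zero, zero_add]
    rw [← Matrix.kronecker_add, sub_add_cancel, Matrix.one_kronecker_one]
  · intro X
    rw [hBH]
    simp only [Matrix.add_mul, Matrix.mul_add, ← Matrix.mul_kronecker_mul, ← mconj_mul,
      hRP, hPR, hRQ, hQR, hQP₁, hPQ₁, hQ₁proj,
      Matrix.kronecker_zero, add_zero, zero_add]

/-- The composition of two encodings is again an encoding, with ancilla projectors
`P = P⁽²⁾ ⊗ P⁽¹⁾ + Q̄⁽²⁾ ⊗ Q⁽¹⁾` and `Q = Q⁽²⁾ ⊗ P⁽¹⁾ + P̄⁽²⁾ ⊗ Q⁽¹⁾`. -/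
theorem composition_of_encodings
    {n m m' e₁ e₂ : ℕ}
    (W : Matrix (Fin m) (Fin n × Fin e₂) ℂ) (hW : Wᴴ * W = 1)
    (V : Matrix (Fin m') (Fin m × Fin e₁) ℂ) (hV : Vᴴ * V = 1)
    (P₂ Q₂ : Matrix (Fin e₂) (Fin e₂) ℂ)
    (hP₂herm : P₂.IsHermitian) (hP₂proj : P₂ * P₂ = P₂)
    (hQ₂herm : Q₂.IsHermitian) (hQ₂proj : Q₂ * Q₂ = Q₂) (hPQ₂ : P₂ * Q₂ = 0)
    (P₁ Q₁ : Matrix (Fin e₁) (Fin e₁) ℂ)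
    (hP₁herm : P₁.IsHermitian) (hP₁proj : P₁ * P₁ = P₁)
    (hQ₁herm : Q₁.IsHermitian) (hQ₁proj : Q₁ * Q₁ = Q₁) (hPQ₁ : P₁ * Q₁ = 0) :
    ((P₂ ⊗ₖ P₁ + mconj Q₂ ⊗ₖ Q₁).IsHermitian ∧
      (P₂ ⊗ₖ P₁ + mconj Q₂ ⊗ₖ Q₁) * (P₂ ⊗ₖ P₁ + mconj Q₂ ⊗ₖ Q₁)
        = P₂ ⊗ₖ P₁ + mconj Q₂ ⊗ₖ Q₁) ∧
    ((Q₂ ⊗ₖ P₁ + mconj P₂ ⊗ₖ Q₁).IsHermitian ∧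
      (Q₂ ⊗ₖ P₁ + mconj P₂ ⊗ₖ Q₁) * (Q₂ ⊗ₖ P₁ + mconj P₂ ⊗ₖ Q₁)
        = Q₂ ⊗ₖ P₁ + mconj P₂ ⊗ₖ Q₁) ∧
    (P₂ ⊗ₖ P₁ + mconj Q₂ ⊗ₖ Q₁) * (Q₂ ⊗ₖ P₁ + mconj P₂ ⊗ₖ Q₁) = 0 ∧
    ∃ U' : Matrix (Fin m') (Fin n × (Fin e₂ × Fin e₁)) ℂ,
      U'ᴴ * U' = 1 ∧
      ∀ M : Matrix (Fin n) (Fin n) ℂ,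
        V * ((W * (M ⊗ₖ P₂ + mconj M ⊗ₖ Q₂) * Wᴴ) ⊗ₖ P₁ +
              mconj (W * (M ⊗ₖ P₂ + mconj M ⊗ₖ Q₂) * Wᴴ) ⊗ₖ Q₁) * Vᴴ
          = U' * (M ⊗ₖ (P₂ ⊗ₖ P₁ + mconj Q₂ ⊗ₖ Q₁) +
              mconj M ⊗ₖ (Q₂ ⊗ₖ P₁ + mconj P₂ ⊗ₖ Q₁)) * U'ᴴ := by
  have hQP₁ : Q₁ * P₁ = 0 := by
    have := congrArg Matrix.conjTranspose hPQ₁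
    simpa [Matrix.conjTranspose_mul, hP₁herm.eq, hQ₁herm.eq] using this
  have hQP₂ : Q₂ * P₂ = 0 := by
    have := congrArg Matrix.conjTranspose hPQ₂
    simpa [Matrix.conjTranspose_mul, hP₂herm.eq, hQ₂herm.eq] using this
  obtain ⟨hBB, hBmap⟩ := encode_aux W hW P₁ Q₁ hP₁herm hQ₁herm hQ₁proj hPQ₁ hQP₁
  refine ⟨⟨?_, ?_⟩, ⟨?_, ?_⟩, ?_, ?_⟩
  · show _ = _
    rw [Matrix.conjTranspose_add, kronecker_conjTranspose, kronecker_conjTranspose,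
      conjTranspose_mconj, hP₂herm.eq, hP₁herm.eq, hQ₂herm.eq, hQ₁herm.eq]
  · simp only [add_mul, mul_add, ← Matrix.mul_kronecker_mul, ← mconj_mul,
      hP₂proj, hP₁proj, hQ₁proj, hQ₂proj, hPQ₁, hQP₁,
      Matrix.kronecker_zero, add_zero, zero_add]
  · show _ = _
    rw [Matrix.conjTranspose_add, kronecker_conjTranspose, kronecker_conjTranspose,
      conjTranspose_mconj, hP₂herm.eq, hP₁herm.eq, hQ₂herm.eq, hQ₁herm.eq]
  · simp only [add_mul, mul_add, ← Matrix.mul_kronecker_mul, ← mconj_mul,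
      hP₂proj, hP₁proj, hQ₁proj, hQ₂proj, hPQ₁, hQP₁,
      Matrix.kronecker_zero, add_zero, zero_add]
  · simp only [add_mul, mul_add, ← Matrix.mul_kronecker_mul, ← mconj_mul,
      hPQ₂, hQP₂, hPQ₁, hQP₁, mconj_zero,
      Matrix.kronecker_zero, Matrix.zero_kronecker, add_zero, zero_add]
  · -- existence of U'
    refine ⟨(V * (W ⊗ₖ (1 - Q₁) + mconj W ⊗ₖ Q₁)).submatrix id
      (⇑(Equiv.prodAssoc (Fin n) (Fin e₂) (Fin e₁)).symm), ?_, ?_⟩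
    · rw [Matrix.conjTranspose_submatrix]
      have h := Matrix.submatrix_mul_equiv
        ((V * (W ⊗ₖ (1 - Q₁) + mconj W ⊗ₖ Q₁))ᴴ) (V * (W ⊗ₖ (1 - Q₁) + mconj W ⊗ₖ Q₁))
        (⇑(Equiv.prodAssoc (Fin n) (Fin e₂) (Fin e₁)).symm) (Equiv.refl (Fin m'))
        (⇑(Equiv.prodAssoc (Fin n) (Fin e₂) (Fin e₁)).symm)
      simp only [Equiv.coe_refl] at h
      rw [h, Matrix.conjTranspose_mul, Matrix.mul_assoc,
        ← Matrix.mul_assoc Vᴴ, hV, Matrix.one_mul, hBB, Matrix.submatrix_one_equiv]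
    · intro M
      set Xin : Matrix (Fin n × Fin e₂) (Fin n × Fin e₂) ℂ := M ⊗ₖ P₂ + mconj M ⊗ₖ Q₂ with hXin
      have hZ : (M ⊗ₖ (P₂ ⊗ₖ P₁ + mconj Q₂ ⊗ₖ Q₁) +
            mconj M ⊗ₖ (Q₂ ⊗ₖ P₁ + mconj P₂ ⊗ₖ Q₁))
          = (Xin ⊗ₖ P₁ + mconj Xin ⊗ₖ Q₁).submatrix
              (⇑(Equiv.prodAssoc (Fin n) (Fin e₂) (Fin e₁)).symm)
              (⇑(Equiv.prodAssoc (Fin n) (Fin e₂) (Fin e₁)).symm) := by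
        ext ⟨i, a, b⟩ ⟨j, c, d⟩
        simp [hXin, mconj, Matrix.submatrix_apply, Matrix.kroneckerMap_apply,
          Equiv.prodAssoc, map_add, map_mul]
        ring
      rw [hZ, Matrix.conjTranspose_submatrix]
      have h1 := Matrix.submatrix_mul_equiv
        (V * (W ⊗ₖ (1 - Q₁) + mconj W ⊗ₖ Q₁)) (Xin ⊗ₖ P₁ + mconj Xin ⊗ₖ Q₁)
        (id : Fin m' → Fin m') (Equiv.prodAssoc (Fin n) (Fin e₂) (Fin e₁)).symm
        (⇑(Equiv.prodAssoc (Fin n) (Fin e₂) (Fin e₁)).symm)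
      have h2 := Matrix.submatrix_mul_equiv
        ((V * (W ⊗ₖ (1 - Q₁) + mconj W ⊗ₖ Q₁)) * (Xin ⊗ₖ P₁ + mconj Xin ⊗ₖ Q₁))
        ((V * (W ⊗ₖ (1 - Q₁) + mconj W ⊗ₖ Q₁))ᴴ)
        (id : Fin m' → Fin m') (Equiv.prodAssoc (Fin n) (Fin e₂) (Fin e₁)).symm
        (id : Fin m' → Fin m')
      rw [h1, h2, Matrix.submatrix_id_id, Matrix.conjTranspose_mul, ← hBmap Xin]
      simp only [Matrix.mul_assoc]
end

section
/- Let ψ ∈ ℂᵐ be a unit vector, let P be an orthogonal projector on ℂᵐ, and set x = 1 − ⟨ψ, Pψ⟩ (a real number in [0,1]). Then the trace norm of the difference between the rank-one projector onto ψ and its compression by P satisfies the exact identity: ‖ ψψ† − P·ψψ†·P ‖₁ = √(x(4 − 3x)). -/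
open scoped Matrix ComplexOrder

noncomputable def traceNorm {m n : Type*} [Fintype m] [Fintype n] [DecidableEq n]
    (A : Matrix m n ℂ) : ℝ :=
  (((Matrix.posSemidef_conjTranspose_mul_self A).1.eigenvectorUnitary : Matrix n n ℂ) *
      Matrix.diagonal ((fun r : ℝ => (r : ℂ)) ∘ (√·) ∘ (Matrix.posSemidef_conjTranspose_mul_self A).1.eigenvalues) *
      (star (Matrix.posSemidef_conjTranspose_mul_self A).1.eigenvectorUnitary : Matrix n n ℂ)).trace.re

/-!
Write `φ = Pψ` and `c = ⟨ψ, φ⟩`. Since `P` is a Hermitian idempotent, `⟨φ, ψ⟩ = ⟨φ, φ⟩ = c`,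
and `ψψ† − Pψψ†P = ψψ† − φφ† = uv† + vu†` with `u = ψ + φ`, `v = (ψ − φ)/2`, where `⟨u, v⟩`
is real. For such `u, v` the positive square root of `(uv† + vu†)²` is
`(‖v‖/‖u‖) uu† + (‖u‖/‖v‖) vv†`, whose trace is `2‖u‖‖v‖`. Here `‖u‖² = 1 + 3c` and
`‖v‖² = (1 − c)/4`.
-/

open Matrix

section

variable {n : Type*}

theorem vecMulVec_self_star_sub_vecMulVec_self_star (ψ φ : n → ℂ) :
    vecMulVec ψ (star ψ) - vecMulVec φ (star φ) =
      vecMulVec (ψ + φ) (star ((2⁻¹ : ℝ) • (ψ - φ))) +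
        vecMulVec ((2⁻¹ : ℝ) • (ψ - φ)) (star (ψ + φ)) := by
  simp only [star_smul, star_trivial, star_add, star_sub, smul_vecMulVec, vecMulVec_smul,
    add_vecMulVec, vecMulVec_add, sub_vecMulVec, vecMulVec_sub]
  module

variable [Fintype n]

theorem dotProduct_star_self_eq_ofReal_re (u : n → ℂ) :
    star u ⬝ᵥ u = ((star u ⬝ᵥ u).re : ℂ) :=
  Complex.eq_re_of_ofReal_le (r := 0) <| by
    rw [Complex.ofReal_zero]; exact dotProduct_star_self_nonneg u

variable [DecidableEq n]

open scoped MatrixOrder in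
/-- `traceNorm A` is the trace of the continuous-functional-calculus square root of `Aᴴ * A`,
written out in an eigenbasis; uniqueness of positive square roots does the rest. -/
theorem traceNorm_eq_trace_of_sq_eq {A S : Matrix n n ℂ} (hS : S.PosSemidef)
    (h : S ^ 2 = Aᴴ * A) : traceNorm A = S.trace.re := by
  have hpsd := posSemidef_conjTranspose_mul_self A
  have hsqrt : CFC.sqrt (Aᴴ * A) = S := CFC.sqrt_unique (by rw [← sq, h]) hS.nonneg
  rw [CFC.sqrt_eq_cfc, cfc_nnreal_eq_real _ _ hpsd.nonneg, hpsd.1.cfc_eq] at hsqrt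
  rw [← hsqrt, traceNorm, IsHermitian.cfc, Unitary.conjStarAlgAut_apply]
  simp [Function.comp_def, Real.coe_sqrt, Real.coe_toNNReal', hpsd.eigenvalues_nonneg]

theorem traceNorm_zero : traceNorm (0 : Matrix n n ℂ) = 0 := by
  simpa using
    traceNorm_eq_trace_of_sq_eq (A := (0 : Matrix n n ℂ)) PosSemidef.zero (by simp)

theorem sq_vecMulVec_star_add_vecMulVec_star {u v : n → ℂ}
    (huv : star u ⬝ᵥ v = star v ⬝ᵥ u) :
    (vecMulVec u (star v) + vecMulVec v (star u)) ^ 2 =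
      (star v ⬝ᵥ u) • (vecMulVec u (star v) + vecMulVec v (star u)) +
        (star v ⬝ᵥ v) • vecMulVec u (star u) + (star u ⬝ᵥ u) • vecMulVec v (star v) := by
  simp only [sq, add_mul, mul_add, vecMulVec_mul_vecMulVec, vecMulVec_smul, huv]
  module

theorem sq_smul_vecMulVec_star_add_vecMulVec_star {u v : n → ℂ} {a b k : ℝ}
    (huv : star u ⬝ᵥ v = star v ⬝ᵥ u) (ha : star u ⬝ᵥ u = a) (hb : star v ⬝ᵥ v = b)
    (hk : k ^ 2 * (a * b) = 1) :
    (k • (b • vecMulVec u (star u) + a • vecMulVec v (star v))) ^ 2 =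
      (vecMulVec u (star v) + vecMulVec v (star u)) ^ 2 := by
  have hk' : (k : ℂ) ^ 2 * (a * b) = 1 := by exact_mod_cast hk
  rw [sq_vecMulVec_star_add_vecMulVec_star huv]
  simp only [sq, add_mul, mul_add, smul_mul_assoc, mul_smul_comm, vecMulVec_mul_vecMulVec,
    vecMulVec_smul, ha, hb, huv]
  match_scalars <;> simp only [Complex.coe_algebraMap]
  · linear_combination (b : ℂ) * hk'
  · linear_combination (star v ⬝ᵥ u) * hk'
  · linear_combination (star v ⬝ᵥ u) * hk'
  · linear_combination (a : ℂ) * hk'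

theorem traceNorm_vecMulVec_star_add_vecMulVec_star (u v : n → ℂ)
    (huv : star u ⬝ᵥ v = star v ⬝ᵥ u) :
    traceNorm (vecMulVec u (star v) + vecMulVec v (star u)) =
      2 * √((star u ⬝ᵥ u).re * (star v ⬝ᵥ v).re) := by
  set a := (star u ⬝ᵥ u).re
  set b := (star v ⬝ᵥ v).re
  have ha : star u ⬝ᵥ u = a := dotProduct_star_self_eq_ofReal_re u
  have hb : star v ⬝ᵥ v = b := dotProduct_star_self_eq_ofReal_re v
  have ha0 : 0 ≤ a := Complex.zero_le_real.mp (ha ▸ dotProduct_star_self_nonneg u)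
  have hb0 : 0 ≤ b := Complex.zero_le_real.mp (hb ▸ dotProduct_star_self_nonneg v)
  rcases eq_or_ne (a * b) 0 with hab | hab
  · have huv0 : u = 0 ∨ v = 0 := by
      simpa [← dotProduct_star_self_eq_zero, ha, hb] using hab
    rw [hab, Real.sqrt_zero, mul_zero]
    rcases huv0 with rfl | rfl <;> simp [traceNorm_zero]
  have hs : √(a * b) ≠ 0 := by positivity
  have hS :
      ((√(a * b))⁻¹ • (b • vecMulVec u (star u) + a • vecMulVec v (star v))).PosSemidef :=
    (((posSemidef_vecMulVec_self_star u).smul hb0).add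
      ((posSemidef_vecMulVec_self_star v).smul ha0)).smul (by positivity)
  have hM : (vecMulVec u (star v) + vecMulVec v (star u))ᴴ =
      vecMulVec u (star v) + vecMulVec v (star u) := by
    simp [add_comm]
  rw [traceNorm_eq_trace_of_sq_eq hS]
  · simp only [trace_smul, trace_add, trace_vecMulVec, dotProduct_comm _ (star _), ha, hb,
      Complex.real_smul, ← Complex.ofReal_mul, ← Complex.ofReal_add, Complex.ofReal_re]
    field_simp
    rw [Real.sq_sqrt (mul_nonneg ha0 hb0)]
    ring
  · rw [hM, ← sq]
    refine sq_smul_vecMulVec_star_add_vecMulVec_star huv ha hb ?_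
    rw [inv_pow, Real.sq_sqrt (mul_nonneg ha0 hb0), inv_mul_cancel₀ hab]

theorem traceNorm_vecMulVec_self_star_sub_vecMulVec_self_star (ψ φ : n → ℂ)
    (h : star ψ ⬝ᵥ φ = star φ ⬝ᵥ ψ) :
    traceNorm (vecMulVec ψ (star ψ) - vecMulVec φ (star φ)) =
      √((star (ψ + φ) ⬝ᵥ (ψ + φ)).re * (star (ψ - φ) ⬝ᵥ (ψ - φ)).re) := by
  rw [vecMulVec_self_star_sub_vecMulVec_self_star, traceNorm_vecMulVec_star_add_vecMulVec_star]
  · simp only [star_smul, star_trivial, smul_dotProduct, dotProduct_smul, Complex.smul_re,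
      smul_eq_mul]
    generalize (star (ψ + φ) ⬝ᵥ (ψ + φ)).re = x
    generalize (star (ψ - φ) ⬝ᵥ (ψ - φ)).re = y
    rw [show x * y = 2 ^ 2 * (x * (2⁻¹ * (2⁻¹ * y))) by ring,
      Real.sqrt_mul (by norm_num : (0 : ℝ) ≤ 2 ^ 2), Real.sqrt_sq (by norm_num : (0 : ℝ) ≤ 2)]
  · simp only [star_smul, star_trivial, star_add, star_sub, dotProduct_smul, smul_dotProduct,
      add_dotProduct, dotProduct_add, sub_dotProduct, dotProduct_sub, h]
    module

end

/-- For a unit vector `ψ` and an orthogonal projector `P`, with `x = 1 − ⟨ψ, Pψ⟩`,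
the trace norm of `ψψ† − P ψψ† P` is exactly `√(x(4 − 3x))`. -/
theorem traceNorm_projector_compression
    {m : ℕ} (ψ : Fin m → ℂ) (hψ : star ψ ⬝ᵥ ψ = 1)
    (P : Matrix (Fin m) (Fin m) ℂ) (hPherm : P.IsHermitian) (hPproj : P * P = P) :
    traceNorm (Matrix.vecMulVec ψ (star ψ) - P * Matrix.vecMulVec ψ (star ψ) * P)
      = Real.sqrt ((1 - (star ψ ⬝ᵥ (P *ᵥ ψ)).re) *
          (4 - 3 * (1 - (star ψ ⬝ᵥ (P *ᵥ ψ)).re))) := by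
  set φ := P *ᵥ ψ
  set c := star ψ ⬝ᵥ φ
  have hφ : star φ = star ψ ᵥ* P := by rw [star_mulVec, hPherm.eq]
  have hφψ : star φ ⬝ᵥ ψ = c := by rw [hφ, ← dotProduct_mulVec]
  have hφφ : star φ ⬝ᵥ φ = c := by rw [hφ, ← dotProduct_mulVec, mulVec_mulVec, hPproj]
  have hcompr : P * vecMulVec ψ (star ψ) * P = vecMulVec φ (star φ) := by
    rw [mul_vecMulVec, vecMulVec_mul, ← hφ]
  have hplus : star (ψ + φ) ⬝ᵥ (ψ + φ) = 1 + 3 * c := by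
    simp only [star_add, add_dotProduct, dotProduct_add, hψ, hφψ, hφφ]
    ring
  have hminus : star (ψ - φ) ⬝ᵥ (ψ - φ) = 1 - c := by
    simp only [star_sub, sub_dotProduct, dotProduct_sub, hψ, hφψ, hφφ]
    ring
  rw [hcompr, traceNorm_vecMulVec_self_star_sub_vecMulVec_self_star ψ φ hφψ.symm, hplus,
    hminus]
  congr 1
  simp only [Complex.add_re, Complex.sub_re, Complex.one_re, Complex.mul_re, Complex.re_ofNat,
    Complex.im_ofNat]
  ring
end
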